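/- Under Assumption (A) on the utilities and Assumption (Z) on the density, the map D ↦ H(D) = exp(G^{-1}(D + ln Z·𝟙)) is continuous from ℝ^N into random vectors with respect to almost-sure convergence, and for every p > 0 it is continuous as a map from ℝ^N into L^p(ℙ)^N and into L^p(ℚ)^N, where dℚ = Z dℙ. In particular, h(D) = ln E^ℚ[H(D)] (componentwise) is finite for every D ∈ ℝ^N. -/

import Mathlib

/-!
Write `S = ∑ j, y j`, `c i = μ i / (1 + μ i)` and `x i = y i - μ i * (S - y i)` for the
argument of `V i`. Then `G i y = W i (x i) - c i * S` with `W i x = V i x + c i * x`, and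
`y i = (1 - c i) * x i + c i * S`; so `G y = d` says `y i = ρ i (d i) S` with
`ρ i t S = (1 - c i) * (W i)⁻¹ (t + c i * S) + c i * S`, together with
`S = ∑ i, ρ i (d i) S`. Since `(W i)' = c i - RRA ≤ -ε i`, each `ρ i` is Lipschitz and its
slope in `S` is at most `c i ≤ 1 / N`; at the distinguished index of (A) it is `< 1 / N`,
either because `λ i < 1` or because `RRA ≤ R` caps it by `c i * (R - 1) / (R - c i)`. Hence
`S ↦ S - ∑ i, ρ i (d i) S` is expanding, its zero depends Lipschitz-continuously on `d`, and
`G⁻¹` is globally Lipschitz.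

If `K` is its Lipschitz constant, `H D ≤ C(D) * (Z ^ K + Z ^ (-K))` locally uniformly in `D`,
and since all moments of `Z` are finite under `ℙ`, hence under `ℚ`, dominated convergence gives
the continuity in `L^p(ℙ)` and `L^p(ℚ)`.
-/

open MeasureTheory

/-- Relative risk aversion `RRA[U](x) = -x·U''(x)/U'(x)`. -/
noncomputable def RRA (U : ℝ → ℝ) (x : ℝ) : ℝ := -x * deriv (deriv U) x / deriv U x

/-- `V(y) = ln U'(e^y)`. -/
noncomputable def Vfun (U : ℝ → ℝ) (y : ℝ) : ℝ := Real.log (deriv U (Real.exp y))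

/-- The map `G : ℝ^N → ℝ^N`, `G^i(y) = V_i(y^i − μ_i·Σ_{j≠i} y^j) − μ_i·Σ_{j≠i} y^j`. -/
noncomputable def Gmap {N : ℕ} (U : Fin N → ℝ → ℝ) (μ : Fin N → ℝ)
    (y : Fin N → ℝ) : Fin N → ℝ :=
  fun i => Vfun (U i) (y i - μ i * ∑ j ∈ Finset.univ.erase i, y j)
    - μ i * ∑ j ∈ Finset.univ.erase i, y j

/-- `H(D)(ω) = exp(G^{-1}(D + ln Z(ω)·𝟙))`, componentwise. -/
noncomputable def Hmap {Ω : Type*} {N : ℕ} (U : Fin N → ℝ → ℝ) (μ : Fin N → ℝ)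
    (Z : Ω → ℝ) (D : Fin N → ℝ) (ω : Ω) : Fin N → ℝ :=
  fun i => Real.exp (Function.invFun (Gmap U μ) (fun j => D j + Real.log (Z ω)) i)

/-- Assumption (A) on the utility functions. -/
structure AssumpA {N : ℕ} (U : Fin N → ℝ → ℝ) (lam μ eps : Fin N → ℝ) : Prop where
  mono : ∀ i, StrictMonoOn (U i) (Set.Ioi 0)
  concave : ∀ i, StrictConcaveOn ℝ (Set.Ioi 0) (U i)
  smooth : ∀ i, ContDiffOn ℝ 2 (U i) (Set.Ioi 0)
  inada0 : ∀ i, Filter.Tendsto (deriv (U i)) (nhdsWithin 0 (Set.Ioi 0)) Filter.atTop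
  inadaInf : ∀ i, Filter.Tendsto (deriv (U i)) Filter.atTop (nhds 0)
  epsPos : ∀ i, 0 < eps i
  rraLB : ∀ i, ∀ x > 0, eps i + μ i / (1 + μ i) ≤ RRA (U i) x
  special : ∃ i, lam i < 1 ∨ ∃ R : ℝ, 0 < R ∧ ∀ x > 0, RRA (U i) x ≤ R

open Filter Set Function
open scoped ENNReal NNReal Topology

section Expanding

variable {g : ℝ → ℝ} {δ : ℝ}

theorem mul_abs_sub_le_of_mul_sub_le (hg : ∀ s t, s ≤ t → δ * (t - s) ≤ g t - g s)
    (s t : ℝ) :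
    δ * |t - s| ≤ |g t - g s| := by
  rcases le_total s t with h | h
  · rw [abs_of_nonneg (sub_nonneg.2 h)]
    exact (hg s t h).trans (le_abs_self _)
  · rw [abs_sub_comm, abs_of_nonneg (sub_nonneg.2 h), abs_sub_comm]
    exact (hg t s h).trans (le_abs_self _)

theorem strictMono_of_mul_sub_le (hδ : 0 < δ)
    (hg : ∀ s t, s ≤ t → δ * (t - s) ≤ g t - g s) : StrictMono g :=
  fun s t hst => by nlinarith [hg s t hst.le, mul_pos hδ (sub_pos.2 hst)]

theorem surjective_of_mul_sub_le (hδ : 0 < δ) (hcont : Continuous g)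
    (hg : ∀ s t, s ≤ t → δ * (t - s) ≤ g t - g s) : Surjective g := by
  refine hcont.surjective ?_ ?_
  · refine tendsto_atTop_mono' _ ((eventually_ge_atTop 0).mono fun t ht => ?_)
      (tendsto_atTop_add_const_left _ (g 0) (tendsto_id.const_mul_atTop hδ))
    dsimp only [id]; linarith [hg 0 t ht]
  · refine tendsto_atBot_mono' _ ((eventually_le_atBot 0).mono fun t ht => ?_)
      (tendsto_atBot_add_const_left _ (g 0) (tendsto_id.const_mul_atBot hδ))
    dsimp only [id]; linarith [hg t 0 ht]

end Expanding

section DecreasingInverse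

variable {W : ℝ → ℝ} {ε : ℝ}

theorem bijective_of_mul_sub_le_sub (hε : 0 < ε) (hcont : Continuous W)
    (hW : ∀ x x', x ≤ x' → ε * (x' - x) ≤ W x - W x') : Bijective W := by
  have hneg : ∀ x x', x ≤ x' → ε * (x' - x) ≤ -W x' - -W x := fun x x' h => by
    linarith [hW x x' h]
  refine ⟨fun x x' h => (strictMono_of_mul_sub_le hε hneg).injective (by simp [h]),
    fun a => ?_⟩
  obtain ⟨x, hx⟩ := surjective_of_mul_sub_le hε hcont.neg hneg (-a)
  exact ⟨x, neg_injective hx⟩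

theorem invFun_anti_of_mul_sub_le_sub (hε : 0 < ε) (hcont : Continuous W)
    (hW : ∀ x x', x ≤ x' → ε * (x' - x) ≤ W x - W x') {a a' : ℝ} (h : a ≤ a') :
    invFun W a' ≤ invFun W a := by
  have hsurj := (bijective_of_mul_sub_le_sub hε hcont hW).surjective
  by_contra! hlt
  have := hW _ _ hlt.le
  rw [invFun_eq (hsurj a), invFun_eq (hsurj a')] at this
  nlinarith [mul_pos hε (sub_pos.2 hlt)]

theorem mul_abs_invFun_sub_le (hε : 0 < ε) (hcont : Continuous W)
    (hW : ∀ x x', x ≤ x' → ε * (x' - x) ≤ W x - W x') (a a' : ℝ) :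
    ε * |invFun W a - invFun W a'| ≤ |a - a'| := by
  have hsurj := (bijective_of_mul_sub_le_sub hε hcont hW).surjective
  have hneg : ∀ x x', x ≤ x' → ε * (x' - x) ≤ -W x' - -W x := fun x x' h => by
    linarith [hW x x' h]
  have := mul_abs_sub_le_of_mul_sub_le hneg (invFun W a') (invFun W a)
  rwa [invFun_eq (hsurj a), invFun_eq (hsurj a'), neg_sub_neg, abs_sub_comm a'] at this

theorem sub_le_mul_invFun_sub (hε : 0 < ε) (hcont : Continuous W)
    (hW : ∀ x x', x ≤ x' → ε * (x' - x) ≤ W x - W x') {L : ℝ}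
    (hL : ∀ x x', x ≤ x' → W x - W x' ≤ L * (x' - x)) {a a' : ℝ} (h : a ≤ a') :
    a' - a ≤ L * (invFun W a - invFun W a') := by
  have hsurj := (bijective_of_mul_sub_le_sub hε hcont hW).surjective
  have := hL _ _ (invFun_anti_of_mul_sub_le_sub hε hcont hW h)
  rwa [invFun_eq (hsurj a), invFun_eq (hsurj a')] at this

end DecreasingInverse

section Utility

variable {U : ℝ → ℝ} {c : ℝ}

theorem hasDerivAt_Vfun (hsm : ContDiffOn ℝ 2 U (Ioi 0)) (hRRA : ∀ x > 0, RRA U x ≠ 0)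
    (y : ℝ) :
    HasDerivAt (Vfun U) (-RRA U (Real.exp y)) y := by
  have hx : 0 < Real.exp y := Real.exp_pos y
  -- `RRA U x` is a quotient by `deriv U x`, so it would be `0` wherever `deriv U x = 0`
  have hU' : deriv U (Real.exp y) ≠ 0 := fun h => hRRA _ hx (by simp [RRA, h])
  have hU'' : HasDerivAt (deriv U) (deriv (deriv U) (Real.exp y)) (Real.exp y) :=
    (((hsm.deriv_of_isOpen (m := 1) isOpen_Ioi (by norm_num)).differentiableOn
      (by norm_num)).differentiableAt (isOpen_Ioi.mem_nhds hx)).hasDerivAt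
  refine ((hU''.comp y (Real.hasDerivAt_exp y)).log hU').congr_deriv ?_
  simp only [RRA, Function.comp_apply]
  field_simp

noncomputable def shiftedV (U : ℝ → ℝ) (c x : ℝ) : ℝ := Vfun U x + c * x

theorem hasDerivAt_shiftedV (hV : ∀ y, HasDerivAt (Vfun U) (-RRA U (Real.exp y)) y) (x : ℝ) :
    HasDerivAt (shiftedV U c) (c - RRA U (Real.exp x)) x := by
  show HasDerivAt (fun x => Vfun U x + c * x) _ x
  exact ((hV x).add ((hasDerivAt_id' x).const_mul c)).congr_deriv (by ring)

theorem continuous_shiftedV (hV : ∀ y, HasDerivAt (Vfun U) (-RRA U (Real.exp y)) y) :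
    Continuous (shiftedV U c) :=
  continuous_iff_continuousAt.2 fun x => (hasDerivAt_shiftedV hV x).continuousAt

theorem mul_sub_le_shiftedV_sub (hV : ∀ y, HasDerivAt (Vfun U) (-RRA U (Real.exp y)) y)
    {ε : ℝ} (hRRA : ∀ y, ε + c ≤ RRA U (Real.exp y)) {x x' : ℝ} (h : x ≤ x') :
    ε * (x' - x) ≤ shiftedV U c x - shiftedV U c x' := by
  have hd : ∀ x, HasDerivAt (fun x => -shiftedV U c x) (RRA U (Real.exp x) - c) x :=
    fun x => (hasDerivAt_shiftedV hV x).neg.congr_deriv (by ring)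
  have := mul_sub_le_image_sub_of_le_deriv (C := ε) (fun x => (hd x).differentiableAt)
    (fun x => by rw [(hd x).deriv]; linarith [hRRA x]) h
  linarith

theorem shiftedV_sub_le_mul_sub (hV : ∀ y, HasDerivAt (Vfun U) (-RRA U (Real.exp y)) y)
    {R : ℝ} (hR : ∀ y, RRA U (Real.exp y) ≤ R) {x x' : ℝ} (h : x ≤ x') :
    shiftedV U c x - shiftedV U c x' ≤ (R - c) * (x' - x) := by
  have := mul_sub_le_image_sub_of_le_deriv (C := c - R)
    (fun x => (hasDerivAt_shiftedV (c := c) hV x).differentiableAt)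
    (fun x => by rw [(hasDerivAt_shiftedV hV x).deriv]; linarith [hR x]) h
  linarith

end Utility

noncomputable def coordSolution (W : ℝ → ℝ) (c t S : ℝ) : ℝ :=
  (1 - c) * invFun W (t + c * S) + c * S

section CoordSolution

variable {W : ℝ → ℝ} {ε c : ℝ}

theorem abs_coordSolution_sub_le (hε : 0 < ε) (hcont : Continuous W)
    (hW : ∀ x x', x ≤ x' → ε * (x' - x) ≤ W x - W x') (hc0 : 0 ≤ c) (hc1 : c ≤ 1)
    (t t' S S' : ℝ) :
    |coordSolution W c t S - coordSolution W c t' S'| ≤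
      ε⁻¹ * |t - t'| + (ε⁻¹ + 1) * |S - S'| := by
  set a := t + c * S
  set a' := t' + c * S'
  have hinv : |invFun W a - invFun W a'| ≤ ε⁻¹ * |a - a'| :=
    (le_inv_mul_iff₀ hε).2 (mul_abs_invFun_sub_le hε hcont hW a a')
  have ha : |a - a'| ≤ |t - t'| + |S - S'| := by
    calc |a - a'| = |(t - t') + c * (S - S')| := by simp only [a, a']; ring_nf
      _ ≤ |t - t'| + c * |S - S'| := by
          rw [← abs_of_nonneg hc0, ← abs_mul, abs_of_nonneg hc0]; exact abs_add_le _ _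
      _ ≤ |t - t'| + |S - S'| := by nlinarith [abs_nonneg (S - S')]
  calc |coordSolution W c t S - coordSolution W c t' S'|
      = |(1 - c) * (invFun W a - invFun W a') + c * (S - S')| := by
        simp only [coordSolution, a, a']; ring_nf
    _ ≤ (1 - c) * |invFun W a - invFun W a'| + c * |S - S'| := by
        refine (abs_add_le _ _).trans ?_
        rw [abs_mul, abs_mul, abs_of_nonneg (sub_nonneg.2 hc1), abs_of_nonneg hc0]
    _ ≤ |invFun W a - invFun W a'| + |S - S'| := by
        nlinarith [abs_nonneg (invFun W a - invFun W a'), abs_nonneg (S - S')]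
    _ ≤ ε⁻¹ * (|t - t'| + |S - S'|) + |S - S'| := by
        gcongr; exact hinv.trans (by gcongr)
    _ = ε⁻¹ * |t - t'| + (ε⁻¹ + 1) * |S - S'| := by ring

theorem coordSolution_sub_le (hε : 0 < ε) (hcont : Continuous W)
    (hW : ∀ x x', x ≤ x' → ε * (x' - x) ≤ W x - W x') (hc0 : 0 ≤ c) (hc1 : c ≤ 1)
    (t : ℝ) {S S' : ℝ} (h : S ≤ S') :
    coordSolution W c t S' - coordSolution W c t S ≤ c * (S' - S) := by
  have := invFun_anti_of_mul_sub_le_sub hε hcont hW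
    (show t + c * S ≤ t + c * S' by nlinarith)
  simp only [coordSolution]
  nlinarith [mul_le_mul_of_nonneg_left this (sub_nonneg.2 hc1)]

theorem coordSolution_sub_le_of_sub_le (hε : 0 < ε) (hcont : Continuous W)
    (hW : ∀ x x', x ≤ x' → ε * (x' - x) ≤ W x - W x') (hc0 : 0 ≤ c) (hc1 : c ≤ 1)
    {L : ℝ} (hL0 : 0 < L) (hL : ∀ x x', x ≤ x' → W x - W x' ≤ L * (x' - x))
    (t : ℝ) {S S' : ℝ} (h : S ≤ S') :
    coordSolution W c t S' - coordSolution W c t S ≤ c * (1 - (1 - c) / L) * (S' - S) := by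
  have hinv := sub_le_mul_invFun_sub hε hcont hW hL
    (show t + c * S ≤ t + c * S' by nlinarith)
  have hdiv : c * (S' - S) / L ≤ invFun W (t + c * S) - invFun W (t + c * S') := by
    rw [div_le_iff₀' hL0]; linarith
  have hrhs : c * (1 - (1 - c) / L) * (S' - S) = c * (S' - S) - (1 - c) * (c * (S' - S) / L) := by
    field_simp
  simp only [coordSolution]
  rw [hrhs]
  nlinarith [mul_le_mul_of_nonneg_left hdiv (sub_nonneg.2 hc1)]

end CoordSolution

theorem Vfun_sub_eq_iff {U : ℝ → ℝ} {m : ℝ} (hm : 1 + m ≠ 0)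
    (hbij : Bijective (shiftedV U (m / (1 + m)))) (y E t : ℝ) :
    Vfun U (y - m * E) - m * E = t ↔
      y = coordSolution (shiftedV U (m / (1 + m))) (m / (1 + m)) t (y + E) := by
  set c := m / (1 + m)
  set x := y - m * E
  have hV : Vfun U x - m * E = shiftedV U c x - c * (y + E) := by
    simp only [shiftedV, c, x]; field_simp; ring
  have hy : y = (1 - c) * x + c * (y + E) := by simp only [c, x]; field_simp; ring
  have hc : 1 - c ≠ 0 := by simp only [c]; field_simp; simpa using hm
  rw [hV, sub_eq_iff_eq_add, coordSolution]
  constructor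
  · intro h
    rwa [← h, leftInverse_invFun hbij.injective x]
  · intro h
    have : x = invFun (shiftedV U c) (t + c * (y + E)) := mul_left_cancel₀ hc (by linarith)
    rw [this, invFun_eq (hbij.surjective _)]

noncomputable def GinvCoord {N : ℕ} (U : Fin N → ℝ → ℝ) (μ : Fin N → ℝ) (i : Fin N) :
    ℝ → ℝ → ℝ :=
  coordSolution (shiftedV (U i) (μ i / (1 + μ i))) (μ i / (1 + μ i))

theorem Gmap_apply_eq_iff {N : ℕ} {U : Fin N → ℝ → ℝ} {μ : Fin N → ℝ} {i : Fin N}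
    (hμ : 1 + μ i ≠ 0) (hbij : Bijective (shiftedV (U i) (μ i / (1 + μ i))))
    (y : Fin N → ℝ) (t : ℝ) :
    Gmap U μ y i = t ↔ y i = GinvCoord U μ i t (∑ j, y j) := by
  rw [← Finset.add_sum_erase _ _ (Finset.mem_univ i)]
  exact Vfun_sub_eq_iff hμ hbij _ _ _

section SumFixedPoint

variable {ι : Type*} [Fintype ι] {ρ : ι → ℝ → ℝ → ℝ} {κ : ι → ℝ}

theorem one_sub_sum_mul_le_sub
    (hκ : ∀ i t S S', S ≤ S' → ρ i t S' - ρ i t S ≤ κ i * (S' - S))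
    (d : ι → ℝ) {S S' : ℝ} (h : S ≤ S') :
    (1 - ∑ i, κ i) * (S' - S) ≤ (S' - ∑ i, ρ i (d i) S') - (S - ∑ i, ρ i (d i) S) := by
  have := Finset.sum_le_sum fun i (_ : i ∈ Finset.univ) => hκ i (d i) S S' h
  rw [Finset.sum_sub_distrib, ← Finset.sum_mul] at this
  linarith

theorem exists_forall_eq_apply_sum (hρ : ∀ i t, Continuous (ρ i t))
    (hκ : ∀ i t S S', S ≤ S' → ρ i t S' - ρ i t S ≤ κ i * (S' - S))
    (hκ1 : ∑ i, κ i < 1)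
    (d : ι → ℝ) : ∃ y : ι → ℝ, ∀ i, y i = ρ i (d i) (∑ j, y j) := by
  have hcont : Continuous fun S => S - ∑ i, ρ i (d i) S :=
    continuous_id.sub (continuous_finsetSum _ fun i _ => hρ i (d i))
  obtain ⟨S, hS⟩ := surjective_of_mul_sub_le (sub_pos.2 hκ1) hcont
    (fun S S' h => one_sub_sum_mul_le_sub hκ d h) 0
  have hsum : ∑ j, ρ j (d j) S = S := by linarith [show S - ∑ i, ρ i (d i) S = 0 from hS]
  exact ⟨fun i => ρ i (d i) S, fun i => by rw [hsum]⟩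

theorem abs_sub_le_of_forall_eq_apply_sum {a b : ℝ} (ha : 0 ≤ a) (hb : 0 ≤ b)
    (hρ : ∀ i t t' S S', |ρ i t S - ρ i t' S'| ≤ a * |t - t'| + b * |S - S'|)
    (hκ : ∀ i t S S', S ≤ S' → ρ i t S' - ρ i t S ≤ κ i * (S' - S))
    (hκ1 : ∑ i, κ i < 1)
    {d d' y y' : ι → ℝ} (hy : ∀ i, y i = ρ i (d i) (∑ j, y j))
    (hy' : ∀ i, y' i = ρ i (d' i) (∑ j, y' j)) (i : ι) :
    |y i - y' i| ≤ (a + b * (a * Fintype.card ι) / (1 - ∑ j, κ j)) * dist d d' := by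
  set S := ∑ j, y j
  set S' := ∑ j, y' j
  have hδ : 0 < 1 - ∑ j, κ j := sub_pos.2 hκ1
  have hd : ∀ j, |d j - d' j| ≤ dist d d' := fun j => by
    simpa [Real.dist_eq] using dist_le_pi_dist d d' j
  have hgap : S - ∑ j, ρ j (d' j) S = ∑ j, (ρ j (d j) S - ρ j (d' j) S) := by
    rw [Finset.sum_sub_distrib]
    congr 1
    exact Finset.sum_congr rfl fun j _ => hy j
  have hgap' : S' - ∑ j, ρ j (d' j) S' = 0 :=
    sub_eq_zero.2 (Finset.sum_congr rfl fun j _ => hy' j)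
  have hS : (1 - ∑ j, κ j) * |S - S'| ≤ a * Fintype.card ι * dist d d' := by
    have := mul_abs_sub_le_of_mul_sub_le (g := fun S => S - ∑ j, ρ j (d' j) S)
      (fun _ _ h => one_sub_sum_mul_le_sub hκ d' h) S' S
    rw [hgap, hgap', sub_zero] at this
    calc (1 - ∑ j, κ j) * |S - S'| ≤ |∑ j, (ρ j (d j) S - ρ j (d' j) S)| := this
      _ ≤ ∑ j, |ρ j (d j) S - ρ j (d' j) S| := Finset.abs_sum_le_sum_abs _ _
      _ ≤ ∑ _j : ι, a * dist d d' := Finset.sum_le_sum fun j _ => by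
          simpa using (hρ j (d j) (d' j) S S).trans
            (by simpa using mul_le_mul_of_nonneg_left (hd j) ha)
      _ = a * Fintype.card ι * dist d d' := by
          simp only [Finset.sum_const, Finset.card_univ, nsmul_eq_mul]; ring
  calc |y i - y' i| = |ρ i (d i) S - ρ i (d' i) S'| := by rw [← hy i, ← hy' i]
    _ ≤ a * |d i - d' i| + b * |S - S'| := hρ _ _ _ _ _
    _ ≤ a * dist d d' + b * (a * Fintype.card ι * dist d d' / (1 - ∑ j, κ j)) := by
        gcongr
        · exact hd i
        · rw [le_div_iff₀ hδ]; linarith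
    _ = (a + b * (a * Fintype.card ι) / (1 - ∑ j, κ j)) * dist d d' := by ring

end SumFixedPoint

theorem div_one_add_nonneg {m : ℝ} (hm : 0 ≤ m) : 0 ≤ m / (1 + m) :=
  div_nonneg hm (by linarith)

theorem div_one_add_lt_one {m : ℝ} (hm : 0 ≤ m) : m / (1 + m) < 1 :=
  (div_lt_one (by linarith)).2 (by linarith)

theorem div_one_add_le_one_div {m n : ℝ} (hm : 0 ≤ m) (hn : 0 < n) (h : m * (n - 1) ≤ 1) :
    m / (1 + m) ≤ 1 / n := by
  rw [div_le_div_iff₀ (by linarith) hn]; linarith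

theorem div_one_add_lt_one_div {m n : ℝ} (hm : 0 ≤ m) (hn : 0 < n) (h : m * (n - 1) < 1) :
    m / (1 + m) < 1 / n := by
  rw [div_lt_div_iff₀ (by linarith) hn]; linarith

section AssumptionA

variable {N : ℕ} {U : Fin N → ℝ → ℝ} {lam μ eps : Fin N → ℝ} {i : Fin N}

theorem mu_nonneg (hlam : ∀ i, lam i ∈ Icc (0:ℝ) 1)
    (hμ : ∀ i, μ i = lam i / ((N : ℝ) - 1)) (i : Fin N) : 0 ≤ μ i := by
  have : (1 : ℝ) ≤ N := by exact_mod_cast i.pos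
  rw [hμ]
  exact div_nonneg (hlam i).1 (by linarith)

theorem mu_mul_le (hlam : ∀ i, lam i ∈ Icc (0:ℝ) 1)
    (hμ : ∀ i, μ i = lam i / ((N : ℝ) - 1)) (i : Fin N) :
    μ i * ((N : ℝ) - 1) ≤ lam i := by
  rw [hμ]
  rcases eq_or_ne ((N : ℝ) - 1) 0 with h | h
  · simp [h, (hlam i).1]
  · rw [div_mul_cancel₀ _ h]

namespace AssumpA

theorem hasDerivAt_Vfun (hA : AssumpA U lam μ eps) (hμ0 : 0 ≤ μ i) (y : ℝ) :
    HasDerivAt (Vfun (U i)) (-RRA (U i) (Real.exp y)) y :=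
  _root_.hasDerivAt_Vfun (hA.smooth i) (fun x hx => by
    have := hA.rraLB i x hx
    have := hA.epsPos i
    have := div_one_add_nonneg hμ0
    exact (by linarith : (0 : ℝ) < RRA (U i) x).ne') y

theorem continuous_shiftedV (hA : AssumpA U lam μ eps) (hμ0 : 0 ≤ μ i) :
    Continuous (shiftedV (U i) (μ i / (1 + μ i))) :=
  _root_.continuous_shiftedV (hA.hasDerivAt_Vfun hμ0)

theorem mul_sub_le_shiftedV_sub (hA : AssumpA U lam μ eps) (hμ0 : 0 ≤ μ i) (x x' : ℝ)
    (h : x ≤ x') :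
    eps i * (x' - x) ≤
      shiftedV (U i) (μ i / (1 + μ i)) x - shiftedV (U i) (μ i / (1 + μ i)) x' :=
  _root_.mul_sub_le_shiftedV_sub (hA.hasDerivAt_Vfun hμ0)
    (fun y => hA.rraLB i _ (Real.exp_pos y)) h

theorem bijective_shiftedV (hA : AssumpA U lam μ eps) (hμ0 : 0 ≤ μ i) :
    Bijective (shiftedV (U i) (μ i / (1 + μ i))) :=
  bijective_of_mul_sub_le_sub (hA.epsPos i) (hA.continuous_shiftedV hμ0)
    (hA.mul_sub_le_shiftedV_sub hμ0)

theorem abs_GinvCoord_sub_le (hA : AssumpA U lam μ eps) (hμ0 : 0 ≤ μ i) (t t' S S' : ℝ) :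
    |GinvCoord U μ i t S - GinvCoord U μ i t' S'| ≤
      (eps i)⁻¹ * |t - t'| + ((eps i)⁻¹ + 1) * |S - S'| :=
  abs_coordSolution_sub_le (hA.epsPos i) (hA.continuous_shiftedV hμ0)
    (hA.mul_sub_le_shiftedV_sub hμ0) (div_one_add_nonneg hμ0) (div_one_add_lt_one hμ0).le
    t t' S S'

theorem GinvCoord_sub_le (hA : AssumpA U lam μ eps) (hμ0 : 0 ≤ μ i) (t : ℝ) {S S' : ℝ}
    (h : S ≤ S') :
    GinvCoord U μ i t S' - GinvCoord U μ i t S ≤ μ i / (1 + μ i) * (S' - S) :=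
  coordSolution_sub_le (hA.epsPos i) (hA.continuous_shiftedV hμ0)
    (hA.mul_sub_le_shiftedV_sub hμ0) (div_one_add_nonneg hμ0) (div_one_add_lt_one hμ0).le t h

theorem GinvCoord_sub_le_of_RRA_le (hA : AssumpA U lam μ eps) (hμ0 : 0 ≤ μ i) {R : ℝ}
    (hR : ∀ x > 0, RRA (U i) x ≤ R) (t : ℝ) {S S' : ℝ} (h : S ≤ S') :
    GinvCoord U μ i t S' - GinvCoord U μ i t S ≤
      μ i / (1 + μ i) * (1 - (1 - μ i / (1 + μ i)) / (R - μ i / (1 + μ i))) * (S' - S) := by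
  have hRc : 0 < R - μ i / (1 + μ i) := by
    linarith [hA.rraLB i 1 one_pos, hR 1 one_pos, hA.epsPos i]
  exact coordSolution_sub_le_of_sub_le (hA.epsPos i) (hA.continuous_shiftedV hμ0)
    (hA.mul_sub_le_shiftedV_sub hμ0) (div_one_add_nonneg hμ0) (div_one_add_lt_one hμ0).le hRc
    (fun _ _ => shiftedV_sub_le_mul_sub (hA.hasDerivAt_Vfun hμ0)
      (fun y => hR _ (Real.exp_pos y))) t h

theorem exists_slope_lt (hlam : ∀ i, lam i ∈ Icc (0:ℝ) 1)
    (hμ : ∀ i, μ i = lam i / ((N : ℝ) - 1)) (hA : AssumpA U lam μ eps) :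
    ∃ (i₀ : Fin N) (κ₀ : ℝ), κ₀ < 1 / N ∧ ∀ t S S', S ≤ S' →
      GinvCoord U μ i₀ t S' - GinvCoord U μ i₀ t S ≤ κ₀ * (S' - S) := by
  obtain ⟨i₀, hi₀⟩ := hA.special
  have hN : (0 : ℝ) < N := by exact_mod_cast i₀.pos
  have hμ0 := mu_nonneg hlam hμ i₀
  set c := μ i₀ / (1 + μ i₀)
  rcases hi₀ with hlt | ⟨R, -, hR⟩
  · exact ⟨i₀, c, div_one_add_lt_one_div hμ0 hN ((mu_mul_le hlam hμ i₀).trans_lt hlt),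
      fun t _ _ => hA.GinvCoord_sub_le hμ0 t⟩
  refine ⟨i₀, _, ?_, fun t _ _ => hA.GinvCoord_sub_le_of_RRA_le hμ0 hR t⟩
  have hc0 : 0 ≤ c := div_one_add_nonneg hμ0
  have hcN : c ≤ 1 / N :=
    div_one_add_le_one_div hμ0 hN ((mu_mul_le hlam hμ i₀).trans (hlam i₀).2)
  have hq : 0 < (1 - c) / (R - c) := div_pos (by linarith [div_one_add_lt_one hμ0])
    (by linarith [hA.rraLB i₀ 1 one_pos, hR 1 one_pos, hA.epsPos i₀])
  show c * (1 - (1 - c) / (R - c)) < 1 / N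
  rcases hc0.eq_or_lt with h0 | h0
  · rw [← h0, zero_mul]; positivity
  · nlinarith

theorem exists_slope_bound (hlam : ∀ i, lam i ∈ Icc (0:ℝ) 1)
    (hμ : ∀ i, μ i = lam i / ((N : ℝ) - 1)) (hA : AssumpA U lam μ eps) :
    ∃ κ : Fin N → ℝ, (∀ i t S S', S ≤ S' →
      GinvCoord U μ i t S' - GinvCoord U μ i t S ≤ κ i * (S' - S)) ∧ ∑ i, κ i < 1 := by
  obtain ⟨i₀, κ₀, hκ₀N, hκ₀⟩ := hA.exists_slope_lt hlam hμ
  have hN : (0 : ℝ) < N := by exact_mod_cast i₀.pos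
  set c : Fin N → ℝ := fun i => μ i / (1 + μ i)
  have hcN : ∀ i, c i ≤ 1 / N := fun i => div_one_add_le_one_div (mu_nonneg hlam hμ i) hN
    ((mu_mul_le hlam hμ i).trans (hlam i).2)
  refine ⟨Function.update c i₀ κ₀, fun i t S S' h => ?_, ?_⟩
  · rcases eq_or_ne i i₀ with rfl | hi
    · simpa using hκ₀ t S S' h
    · simpa [hi] using hA.GinvCoord_sub_le (mu_nonneg hlam hμ i) t h
  calc ∑ i, Function.update c i₀ κ₀ i < ∑ _i : Fin N, (1 : ℝ) / N := by
        refine Finset.sum_lt_sum (fun i _ => ?_)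
          ⟨i₀, Finset.mem_univ _, by simpa using hκ₀N⟩
        rcases eq_or_ne i i₀ with rfl | hi
        · simpa using hκ₀N.le
        · simpa [hi] using hcN i
    _ = 1 := by
      simp only [one_div, Finset.sum_const, Finset.card_univ, Fintype.card_fin, nsmul_eq_mul]
      field_simp

theorem exists_lipschitzWith_invFun_Gmap (hlam : ∀ i, lam i ∈ Icc (0:ℝ) 1)
    (hμ : ∀ i, μ i = lam i / ((N : ℝ) - 1)) (hA : AssumpA U lam μ eps) :
    ∃ K, LipschitzWith K (invFun (Gmap U μ)) := by
  have hμ0 := mu_nonneg hlam hμ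
  obtain ⟨κ, hκ, hκ1⟩ := hA.exists_slope_bound hlam hμ
  set a := ∑ j, (eps j)⁻¹
  have ha : 0 ≤ a := Finset.sum_nonneg fun j _ => inv_nonneg.2 (hA.epsPos j).le
  have hρ : ∀ i t t' S S', |GinvCoord U μ i t S - GinvCoord U μ i t' S'| ≤
      a * |t - t'| + (a + 1) * |S - S'| := fun i t t' S S' => by
    have hai : (eps i)⁻¹ ≤ a :=
      Finset.single_le_sum (fun j _ => inv_nonneg.2 (hA.epsPos j).le) (Finset.mem_univ i)
    refine (hA.abs_GinvCoord_sub_le (hμ0 i) t t' S S').trans ?_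
    gcongr
  have hρc : ∀ i t, Continuous (GinvCoord U μ i t) := fun i t =>
    (LipschitzWith.of_dist_le' (K := a + 1) fun S S' => by
      simpa [Real.dist_eq] using hρ i t t S S').continuous
  have hGeq := fun i => Gmap_apply_eq_iff (U := U) (i := i) (by linarith [hμ0 i])
    (hA.bijective_shiftedV (hμ0 i))
  have hsurj : ∀ d, Gmap U μ (invFun (Gmap U μ) d) = d := fun d => by
    obtain ⟨y, hy⟩ := exists_forall_eq_apply_sum hρc hκ hκ1 d
    exact invFun_eq ⟨y, funext fun i => (hGeq i y (d i)).2 (hy i)⟩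
  have hfix : ∀ d i, invFun (Gmap U μ) d i = GinvCoord U μ i (d i)
      (∑ j, invFun (Gmap U μ) d j) := fun d i => (hGeq i _ _).1 (congrFun (hsurj d) i)
  have hK : 0 ≤ a + (a + 1) * (a * N) / (1 - ∑ j, κ j) :=
    add_nonneg ha (div_nonneg (by positivity) (sub_pos.2 hκ1).le)
  refine ⟨_, LipschitzWith.of_dist_le' fun d d' =>
    (dist_pi_le_iff (mul_nonneg hK dist_nonneg)).2 fun i => ?_⟩
  rw [Real.dist_eq]
  simpa using abs_sub_le_of_forall_eq_apply_sum ha (by positivity) hρ hκ hκ1 (hfix d) (hfix d') i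

end AssumpA

end AssumptionA

theorem tendsto_eLpNorm_sub_of_dominated {α ι E : Type*} [MeasurableSpace α] {ν : Measure α}
    [NormedAddCommGroup E] {l : Filter ι} [l.IsCountablyGenerated] {F : ι → α → E}
    {f : α → E} {g : α → ℝ} {p : ℝ≥0∞} (hp : p ≠ ∞)
    (hF : ∀ᶠ n in l, AEStronglyMeasurable (F n) ν) (hf : AEStronglyMeasurable f ν)
    (hg : MemLp g p ν) (h_bound : ∀ᶠ n in l, ∀ᵐ a ∂ν, ‖F n a - f a‖ ≤ g a)
    (h_lim : ∀ᵐ a ∂ν, Tendsto (fun n => F n a) l (𝓝 (f a))) :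
    Tendsto (fun n => eLpNorm (fun a => F n a - f a) p ν) l (𝓝 0) := by
  rcases eq_or_ne p 0 with rfl | hp0
  · simpa using tendsto_const_nhds
  have hq : 0 < p.toReal := ENNReal.toReal_pos hp0 hp
  have hlim : Tendsto (fun n => ∫⁻ a, ‖F n a - f a‖ₑ ^ p.toReal ∂ν) l (𝓝 0) := by
    have := tendsto_lintegral_filter_of_dominated_convergence' (f := 0)
      (fun a => ‖g a‖ₑ ^ p.toReal)
      (hF.mono fun n hn => (hn.sub hf).enorm.pow_const _)
      (h_bound.mono fun n hn => hn.mono fun a ha => ENNReal.rpow_le_rpow (by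
        rw [← ofReal_norm, ← ofReal_norm, Real.norm_eq_abs]
        exact ENNReal.ofReal_le_ofReal (ha.trans (le_abs_self _))) hq.le)
      (lintegral_rpow_enorm_lt_top_of_eLpNorm_lt_top hp0 hp hg.eLpNorm_lt_top).ne
      (h_lim.mono fun a ha => by
        have : Tendsto (fun n => ‖F n a - f a‖ₑ) l (𝓝 0) := by
          simpa using (tendsto_sub_nhds_zero_iff.2 ha).enorm
        have h := ((ENNReal.continuous_rpow_const (y := p.toReal)).tendsto 0).comp this
        rwa [ENNReal.zero_rpow_of_pos hq] at h)
    simpa using this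
  simp_rw [eLpNorm_eq_lintegral_rpow_enorm_toReal hp0 hp]
  have h := ((ENNReal.continuous_rpow_const (y := 1 / p.toReal)).tendsto 0).comp hlim
  rwa [ENNReal.zero_rpow_of_pos (one_div_pos.2 hq)] at h

theorem exp_mul_abs_log_le {z : ℝ} (hz : 0 < z) (K : ℝ) :
    Real.exp (K * |Real.log z|) ≤ z ^ K + z ^ (-K) := by
  rcases le_total 0 (Real.log z) with h | h
  · rw [abs_of_nonneg h, mul_comm, ← Real.rpow_def_of_pos hz]
    linarith [Real.rpow_pos_of_pos hz (-K)]
  · rw [abs_of_nonpos h, mul_neg, ← neg_mul, mul_comm, ← Real.rpow_def_of_pos hz]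
    linarith [Real.rpow_pos_of_pos hz K]

section Moments

variable {Ω : Type*} [MeasurableSpace Ω] {ν : Measure Ω} {Z : Ω → ℝ}

theorem memLp_rpow_of_forall_integrable_rpow (hZ : Measurable Z) (hZpos : ∀ ω, 0 < Z ω)
    (hmom : ∀ r : ℝ, Integrable (fun ω => Z ω ^ r) ν) (r : ℝ) {p : ℝ≥0∞}
    (hp : p ≠ ∞) :
    MemLp (fun ω => Z ω ^ r) p ν := by
  have hmeas := (hZ.pow_const r).aestronglyMeasurable (μ := ν)
  rcases eq_or_ne p 0 with rfl | hp0
  · exact memLp_zero_iff_aestronglyMeasurable.2 hmeas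
  refine (integrable_norm_rpow_iff hmeas hp0 hp).1 ((hmom (r * p.toReal)).congr
    (ae_of_all _ fun ω => ?_))
  dsimp only
  rw [Real.norm_eq_abs, abs_of_pos (Real.rpow_pos_of_pos (hZpos ω) r),
    ← Real.rpow_mul (hZpos ω).le]

theorem integrable_rpow_withDensity (hZ : Measurable Z) (hZpos : ∀ ω, 0 < Z ω)
    (hmom : ∀ r : ℝ, Integrable (fun ω => Z ω ^ r) ν) (r : ℝ) :
    Integrable (fun ω => Z ω ^ r) (ν.withDensity fun ω => ENNReal.ofReal (Z ω)) := by
  rw [integrable_withDensity_iff_integrable_smul' hZ.ennreal_ofReal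
    (ae_of_all _ fun _ => ENNReal.ofReal_lt_top)]
  refine (hmom (r + 1)).congr (ae_of_all _ fun ω => ?_)
  simp only [smul_eq_mul, ENNReal.toReal_ofReal (hZpos ω).le,
    Real.rpow_add_one (hZpos ω).ne', mul_comm]

end Moments

theorem lintegral_pos_of_forall_pos {α : Type*} [MeasurableSpace α] {ν : Measure α} [NeZero ν]
    {f : α → ℝ≥0∞} (hf : Measurable f) (h : ∀ a, 0 < f a) : 0 < ∫⁻ a, f a ∂ν := by
  rw [lintegral_pos_iff_support hf, show support f = univ from eq_univ_of_forall fun a => (h a).ne']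
  exact Measure.measure_univ_pos.2 (NeZero.ne ν)

section Hmap

variable {Ω : Type*} {N : ℕ} {U : Fin N → ℝ → ℝ} {μ : Fin N → ℝ} {Z : Ω → ℝ}
  {K : ℝ≥0}

theorem Hmap_pos (D : Fin N → ℝ) (ω : Ω) (i : Fin N) : 0 < Hmap U μ Z D ω i :=
  Real.exp_pos _

theorem continuous_Hmap (hΦ : LipschitzWith K (invFun (Gmap U μ))) (ω : Ω) :
    Continuous fun D => Hmap U μ Z D ω := by
  have := hΦ.continuous
  unfold Hmap
  fun_prop

theorem measurable_Hmap [MeasurableSpace Ω] (hΦ : LipschitzWith K (invFun (Gmap U μ)))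
    (hZ : Measurable Z) (D : Fin N → ℝ) (i : Fin N) :
    Measurable fun ω => Hmap U μ Z D ω i := by
  have := hΦ.continuous
  have hc : Continuous fun v : ℝ => Real.exp (invFun (Gmap U μ) (fun j => D j + v) i) := by
    fun_prop
  exact hc.measurable.comp hZ.log

theorem Hmap_le (hΦ : LipschitzWith K (invFun (Gmap U μ))) {ω : Ω} (hz : 0 < Z ω)
    {D : Fin N → ℝ} {R : ℝ} (hD : ‖D‖ ≤ R) (i : Fin N) :
    Hmap U μ Z D ω i ≤
      Real.exp (‖invFun (Gmap U μ) 0‖ + K * R) * (Z ω ^ (K : ℝ) + Z ω ^ (-(K : ℝ))) := by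
  set Φ := invFun (Gmap U μ)
  set x : Fin N → ℝ := fun j => D j + Real.log (Z ω)
  have hx : ‖x‖ ≤ R + |Real.log (Z ω)| :=
    (pi_norm_le_iff_of_nonneg (by linarith [norm_nonneg D, abs_nonneg (Real.log (Z ω))])).2
      fun j => (norm_add_le _ _).trans (by
        rw [Real.norm_eq_abs (Real.log _)]; gcongr; exact (norm_le_pi_norm D j).trans hD)
  have hΦx : Φ x i ≤ ‖Φ 0‖ + K * (R + |Real.log (Z ω)|) :=
    calc Φ x i ≤ ‖Φ x‖ := (le_abs_self _).trans (norm_le_pi_norm (Φ x) i)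
      _ ≤ ‖Φ 0‖ + ‖Φ x - Φ 0‖ := norm_le_insert' _ _
      _ ≤ ‖Φ 0‖ + K * ‖x‖ := by
          gcongr; simpa [dist_eq_norm] using hΦ.dist_le_mul x 0
      _ ≤ ‖Φ 0‖ + K * (R + |Real.log (Z ω)|) := by gcongr
  calc Hmap U μ Z D ω i = Real.exp (Φ x i) := rfl
    _ ≤ Real.exp (‖Φ 0‖ + K * R + K * |Real.log (Z ω)|) := Real.exp_le_exp.2 (by linarith)
    _ = Real.exp (‖Φ 0‖ + K * R) * Real.exp (K * |Real.log (Z ω)|) := Real.exp_add _ _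
    _ ≤ _ := by gcongr; exact exp_mul_abs_log_le hz K

variable [MeasurableSpace Ω] {ν : Measure Ω}

theorem integrable_Hmap (hΦ : LipschitzWith K (invFun (Gmap U μ))) (hZ : Measurable Z)
    (hZpos : ∀ ω, 0 < Z ω) (hmom : ∀ r : ℝ, Integrable (fun ω => Z ω ^ r) ν)
    (D : Fin N → ℝ) (i : Fin N) : Integrable (fun ω => Hmap U μ Z D ω i) ν :=
  (((hmom K).add (hmom (-K))).const_mul _).mono' (measurable_Hmap hΦ hZ D i).aestronglyMeasurable
    (ae_of_all _ fun ω => by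
      rw [Real.norm_eq_abs, abs_of_pos (Hmap_pos D ω i)]
      exact Hmap_le hΦ (hZpos ω) le_rfl i)

theorem tendsto_eLpNorm_Hmap_sub (hΦ : LipschitzWith K (invFun (Gmap U μ))) (hZ : Measurable Z)
    (hZpos : ∀ ω, 0 < Z ω) (hmom : ∀ r : ℝ, Integrable (fun ω => Z ω ^ r) ν)
    {p : ℝ≥0∞} (hp : p ≠ ∞) (i : Fin N) (D₀ : Fin N → ℝ) :
    Tendsto (fun D => eLpNorm (fun ω => Hmap U μ Z D ω i - Hmap U μ Z D₀ ω i) p ν)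
      (𝓝 D₀) (𝓝 0) := by
  set B := Real.exp (‖invFun (Gmap U μ) 0‖ + K * (‖D₀‖ + 1))
  have hmemLp := fun r => memLp_rpow_of_forall_integrable_rpow hZ hZpos hmom r hp
  refine tendsto_eLpNorm_sub_of_dominated (F := fun D ω => Hmap U μ Z D ω i)
    (g := fun ω => 2 * (B * (Z ω ^ (K : ℝ) + Z ω ^ (-(K : ℝ))))) hp
    (Eventually.of_forall fun D => (measurable_Hmap hΦ hZ D i).aestronglyMeasurable)
    (measurable_Hmap hΦ hZ D₀ i).aestronglyMeasurable
    ((((hmemLp _).add (hmemLp _)).const_mul B).const_mul 2) ?_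
    (ae_of_all _ fun ω => ((continuous_apply i).comp (continuous_Hmap hΦ ω)).tendsto D₀)
  filter_upwards [Metric.closedBall_mem_nhds D₀ one_pos] with D hD
  refine ae_of_all _ fun ω => ?_
  have hDR : ‖D‖ ≤ ‖D₀‖ + 1 :=
    (norm_le_insert' D D₀).trans (by gcongr; rwa [← dist_eq_norm, ← Metric.mem_closedBall])
  have h := Hmap_le hΦ (hZpos ω) hDR i
  have h₀ := Hmap_le hΦ (hZpos ω) (R := ‖D₀‖ + 1) (by linarith) i
  rw [Real.norm_eq_abs, abs_sub_le_iff]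
  constructor <;> linarith [Hmap_pos (U := U) (μ := μ) (Z := Z) D ω i,
    Hmap_pos (U := U) (μ := μ) (Z := Z) D₀ ω i]

theorem lintegral_Hmap_withDensity_pos [NeZero ν] (hΦ : LipschitzWith K (invFun (Gmap U μ)))
    (hZ : Measurable Z) (hZpos : ∀ ω, 0 < Z ω) (D : Fin N → ℝ) (i : Fin N) :
    0 < ∫⁻ ω, ENNReal.ofReal (Hmap U μ Z D ω i)
      ∂(ν.withDensity fun ω => ENNReal.ofReal (Z ω)) := by
  have hH := (measurable_Hmap hΦ hZ D i).ennreal_ofReal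
  rw [lintegral_withDensity_eq_lintegral_mul _ hZ.ennreal_ofReal hH]
  exact lintegral_pos_of_forall_pos (hZ.ennreal_ofReal.mul hH) fun ω =>
    ENNReal.mul_pos (ENNReal.ofReal_pos.2 (hZpos ω)).ne'
      (ENNReal.ofReal_pos.2 (Hmap_pos D ω i)).ne'

end Hmap

theorem stmt15_general {Ω : Type*} [MeasurableSpace Ω] (P : Measure Ω) [IsProbabilityMeasure P]
    (Z : Ω → ℝ) (hZmeas : Measurable Z) (hZpos : ∀ ω, 0 < Z ω)
    (hZmom : ∀ r : ℝ, Integrable (fun ω => Z ω ^ r) P)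
    (N : ℕ) (U : Fin N → ℝ → ℝ) (lam μ eps : Fin N → ℝ)
    (hlam : ∀ i, lam i ∈ Set.Icc (0:ℝ) 1)
    (hμ : ∀ i, μ i = lam i / ((N : ℝ) - 1))
    (hA : AssumpA U lam μ eps) :
    -- continuity with respect to almost-sure convergence
    (∀ (Dseq : ℕ → Fin N → ℝ) (D₀ : Fin N → ℝ),
      Filter.Tendsto Dseq Filter.atTop (nhds D₀) →
      ∀ᵐ ω ∂P, Filter.Tendsto (fun n => Hmap U μ Z (Dseq n) ω)
        Filter.atTop (nhds (Hmap U μ Z D₀ ω))) ∧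
    -- continuity into L^p(ℙ) and L^p(ℚ), dℚ = Z dℙ, for every p > 0
    (∀ p : ℝ, 0 < p → ∀ i : Fin N, ∀ D₀ : Fin N → ℝ,
      Filter.Tendsto
        (fun D => eLpNorm (fun ω => Hmap U μ Z D ω i - Hmap U μ Z D₀ ω i)
          (ENNReal.ofReal p) P) (nhds D₀) (nhds 0) ∧
      Filter.Tendsto
        (fun D => eLpNorm (fun ω => Hmap U μ Z D ω i - Hmap U μ Z D₀ ω i)
          (ENNReal.ofReal p)
          (P.withDensity fun ω => ENNReal.ofReal (Z ω))) (nhds D₀) (nhds 0)) ∧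
    -- finiteness of h(D) = ln E^ℚ[H(D)]
    (∀ (D : Fin N → ℝ) (i : Fin N),
      0 < ∫⁻ ω, ENNReal.ofReal (Hmap U μ Z D ω i)
          ∂(P.withDensity fun ω => ENNReal.ofReal (Z ω)) ∧
      ∫⁻ ω, ENNReal.ofReal (Hmap U μ Z D ω i)
          ∂(P.withDensity fun ω => ENNReal.ofReal (Z ω)) < ⊤) := by
  obtain ⟨K, hΦ⟩ := hA.exists_lipschitzWith_invFun_Gmap hlam hμ
  have hZmomQ := integrable_rpow_withDensity hZmeas hZpos hZmom
  refine ⟨fun _ D₀ hD => ae_of_all _ fun ω => ((continuous_Hmap hΦ ω).tendsto D₀).comp hD,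
    fun _ _ i D₀ => ⟨?_, ?_⟩, fun D i => ⟨?_, ?_⟩⟩
  · exact tendsto_eLpNorm_Hmap_sub hΦ hZmeas hZpos hZmom ENNReal.ofReal_ne_top i D₀
  · exact tendsto_eLpNorm_Hmap_sub hΦ hZmeas hZpos hZmomQ ENNReal.ofReal_ne_top i D₀
  · exact lintegral_Hmap_withDensity_pos hΦ hZmeas hZpos D i
  · exact (integrable_Hmap hΦ hZmeas hZpos hZmomQ D i).lintegral_lt_top

theorem stmt15 {Ω : Type*} [MeasurableSpace Ω] (P : Measure Ω) [IsProbabilityMeasure P]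
    (Z : Ω → ℝ) (hZmeas : Measurable Z) (hZpos : ∀ ω, 0 < Z ω)
    (hZ1 : ∫ ω, Z ω ∂P = 1)
    (hZmom : ∀ r : ℝ, Integrable (fun ω => Z ω ^ r) P)
    (N : ℕ) (hN : 2 ≤ N) (U : Fin N → ℝ → ℝ) (lam μ eps : Fin N → ℝ)
    (hlam : ∀ i, lam i ∈ Set.Icc (0:ℝ) 1)
    (hμ : ∀ i, μ i = lam i / ((N : ℝ) - 1))
    (hA : AssumpA U lam μ eps) :
    -- continuity with respect to almost-sure convergence
    (∀ (Dseq : ℕ → Fin N → ℝ) (D₀ : Fin N → ℝ),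
      Filter.Tendsto Dseq Filter.atTop (nhds D₀) →
      ∀ᵐ ω ∂P, Filter.Tendsto (fun n => Hmap U μ Z (Dseq n) ω)
        Filter.atTop (nhds (Hmap U μ Z D₀ ω))) ∧
    -- continuity into L^p(ℙ) and L^p(ℚ), dℚ = Z dℙ, for every p > 0
    (∀ p : ℝ, 0 < p → ∀ i : Fin N, ∀ D₀ : Fin N → ℝ,
      Filter.Tendsto
        (fun D => eLpNorm (fun ω => Hmap U μ Z D ω i - Hmap U μ Z D₀ ω i)
          (ENNReal.ofReal p) P) (nhds D₀) (nhds 0) ∧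
      Filter.Tendsto
        (fun D => eLpNorm (fun ω => Hmap U μ Z D ω i - Hmap U μ Z D₀ ω i)
          (ENNReal.ofReal p)
          (P.withDensity fun ω => ENNReal.ofReal (Z ω))) (nhds D₀) (nhds 0)) ∧
    -- finiteness of h(D) = ln E^ℚ[H(D)]
    (∀ (D : Fin N → ℝ) (i : Fin N),
      0 < ∫⁻ ω, ENNReal.ofReal (Hmap U μ Z D ω i)
          ∂(P.withDensity fun ω => ENNReal.ofReal (Z ω)) ∧
      ∫⁻ ω, ENNReal.ofReal (Hmap U μ Z D ω i)
          ∂(P.withDensity fun ω => ENNReal.ofReal (Z ω)) < ⊤) :=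
  stmt15_general P Z hZmeas hZpos hZmom N U lam μ eps hlam hμ hA
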